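/- Let θ ∈ (0, 1/2). Then there exist constants c > 0 and t₀ ∈ (0, 1/4) such that for all t ∈ (0, t₀] and all r with 0 < r ≤ t, one has ∫₀¹ G^D_r(t^θ, y)² dy ≥ c · r^{−1/2}. -/

import Mathlib

open Real MeasureTheory

/-- The Dirichlet heat kernel on `[0,1]`:
`G^D_t(x,y) = 2 ∑_{k=1}^∞ e^{-k²π²t} sin(kπx) sin(kπy)`. -/
noncomputable def GD (t x y : ℝ) : ℝ :=
  2 * ∑' k : ℕ, Real.exp (-((k + 1 : ℝ) ^ 2 * π ^ 2 * t)) *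
      Real.sin ((k + 1 : ℝ) * π * x) * Real.sin ((k + 1 : ℝ) * π * y)


lemma summable_exp_sq {r : ℝ} (hr : 0 < r) :
    Summable (fun k : ℕ => Real.exp (-((k + 1 : ℝ) ^ 2 * π ^ 2 * r))) := by
  have h : ∀ k : ℕ, Real.exp (-((k + 1 : ℝ) ^ 2 * π ^ 2 * r)) ≤ Real.exp (-(π^2*r)) ^ (k+1) := by
    intro k
    rw [← Real.exp_nat_mul]
    apply Real.exp_le_exp.mpr
    have h2 : (0:ℝ) < π ^ 2 * r := by positivity
    have h3 : (0:ℝ) ≤ (k:ℝ) := Nat.cast_nonneg k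
    push_cast
    nlinarith [mul_nonneg (mul_nonneg h3 (by linarith : (0:ℝ) ≤ (k:ℝ)+1)) h2.le]
  apply Summable.of_nonneg_of_le (fun k => (Real.exp_pos _).le) h
  have hg : Summable (fun n : ℕ => Real.exp (-(π^2*r)) ^ n) := by
    apply summable_geometric_of_lt_one (Real.exp_pos _).le
    rw [Real.exp_lt_one_iff]
    have : (0:ℝ) < π ^ 2 * r := by positivity
    linarith
  exact ((summable_nat_add_iff 1).mpr hg).congr (fun k => by ring_nf)

lemma term_bound {r : ℝ} (x : ℝ) (k : ℕ) (y : ℝ) :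
    ‖Real.exp (-((k + 1 : ℝ) ^ 2 * π ^ 2 * r)) *
      Real.sin ((k + 1 : ℝ) * π * x) * Real.sin ((k + 1 : ℝ) * π * y)‖
      ≤ Real.exp (-((k + 1 : ℝ) ^ 2 * π ^ 2 * r)) := by
  rw [Real.norm_eq_abs, abs_mul, abs_mul, Real.abs_exp]
  calc Real.exp (-((k + 1 : ℝ) ^ 2 * π ^ 2 * r)) * |Real.sin ((k + 1 : ℝ) * π * x)| * |Real.sin ((k + 1 : ℝ) * π * y)|
      ≤ Real.exp (-((k + 1 : ℝ) ^ 2 * π ^ 2 * r)) * 1 * 1 := by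
        apply mul_le_mul
        · exact mul_le_mul_of_nonneg_left (Real.abs_sin_le_one _) (by positivity)
        · exact Real.abs_sin_le_one _
        · positivity
        · positivity
    _ = _ := by ring

lemma continuous_GD {r : ℝ} (hr : 0 < r) (x : ℝ) : Continuous (fun y => GD r x y) := by
  unfold GD
  apply Continuous.mul continuous_const
  apply continuous_tsum (u := fun k : ℕ => Real.exp (-((k + 1 : ℝ) ^ 2 * π ^ 2 * r)))
  · intro k; continuity
  · exact summable_exp_sq hr
  · exact fun k y => term_bound x k y

lemma integral_cos_mul_const (c : ℝ) (hc : c ≠ 0) :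
    ∫ y in (0:ℝ)..1, Real.cos (c * y) = Real.sin c / c := by
  rw [intervalIntegral.integral_comp_mul_left Real.cos hc]
  simp [integral_cos, div_eq_inv_mul]

lemma integral_cos_zero (c : ℝ) (hc : c ≠ 0) (hs : Real.sin c = 0) :
    ∫ y in (0:ℝ)..1, Real.cos (c * y) = 0 := by
  rw [integral_cos_mul_const c hc, hs, zero_div]

lemma integral_sin_sin (k m : ℕ) :
    ∫ y in (0:ℝ)..1, Real.sin ((k+1:ℝ)*π*y) * Real.sin ((m+1:ℝ)*π*y)
      = if k = m then 1/2 else 0 := by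
  have hprod : ∀ y : ℝ, Real.sin ((k+1:ℝ)*π*y) * Real.sin ((m+1:ℝ)*π*y)
      = Real.cos ((((k:ℝ)-m)*π)*y) / 2 - Real.cos ((((k:ℝ)+m+2)*π)*y) / 2 := by
    intro y
    have h1 : (((k:ℝ)-m)*π)*y = (k+1:ℝ)*π*y - (m+1:ℝ)*π*y := by ring
    have h2 : (((k:ℝ)+m+2)*π)*y = (k+1:ℝ)*π*y + (m+1:ℝ)*π*y := by ring
    rw [h1, h2, Real.cos_sub, Real.cos_add]
    ring
  have hc2 : ((k:ℝ)+m+2)*π ≠ 0 := by positivity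
  have hs2 : Real.sin (((k:ℝ)+m+2)*π) = 0 := by
    have := Real.sin_int_mul_pi ((k:ℤ)+m+2)
    push_cast at this
    convert this using 2 <;> push_cast <;> ring
  have I2 := integral_cos_zero _ hc2 hs2
  rw [intervalIntegral.integral_congr (g := fun y => Real.cos ((((k:ℝ)-m)*π)*y) / 2 - Real.cos ((((k:ℝ)+m+2)*π)*y) / 2) (fun y _ => hprod y)]
  have hint : ∀ c : ℝ, IntervalIntegrable (fun y => Real.cos (c*y) / 2) volume 0 1 := by
    intro c; apply Continuous.intervalIntegrable; continuity
  rw [intervalIntegral.integral_sub (hint _) (hint _), intervalIntegral.integral_div,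
    intervalIntegral.integral_div, I2]
  by_cases hkm : k = m
  · subst hkm
    simp only [sub_self, zero_mul]
    norm_num
  · have hc1 : ((k:ℝ)-m)*π ≠ 0 := by
      have h : (k:ℝ) - m ≠ 0 := sub_ne_zero.mpr (by exact_mod_cast hkm)
      exact mul_ne_zero h Real.pi_ne_zero
    have hs1 : Real.sin (((k:ℝ)-m)*π) = 0 := by
      have := Real.sin_int_mul_pi ((k:ℤ)-m)
      push_cast at this
      convert this using 2 <;> push_cast <;> ring
    rw [integral_cos_zero _ hc1 hs1]
    simp [hkm]

lemma integral_GD_sin {r : ℝ} (hr : 0 < r) (x : ℝ) (m : ℕ) :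
    ∫ y in (0:ℝ)..1, GD r x y * Real.sin ((m+1:ℝ)*π*y)
      = Real.exp (-((m + 1 : ℝ) ^ 2 * π ^ 2 * r)) * Real.sin ((m + 1 : ℝ) * π * x) := by
  set f : ℕ → ℝ → ℝ := fun k y =>
    (Real.exp (-((k + 1 : ℝ) ^ 2 * π ^ 2 * r)) *
      Real.sin ((k + 1 : ℝ) * π * x) * Real.sin ((k + 1 : ℝ) * π * y)) *
      Real.sin ((m+1:ℝ)*π*y) with hf
  have hpt : ∀ y : ℝ, GD r x y * Real.sin ((m+1:ℝ)*π*y) = 2 * ∑' k, f k y := by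
    intro y
    rw [GD, mul_assoc, ← tsum_mul_right]
  have hmeas : ∀ k : ℕ, AEStronglyMeasurable (f k) (volume.restrict (Set.Ioc (0:ℝ) 1)) := by
    intro k
    apply Continuous.aestronglyMeasurable
    continuity
  have hbound : ∀ k y, ‖f k y‖ ≤ Real.exp (-((k + 1 : ℝ) ^ 2 * π ^ 2 * r)) := by
    intro k y
    rw [hf]
    dsimp only
    rw [show Real.exp (-((k + 1 : ℝ) ^ 2 * π ^ 2 * r)) *
        Real.sin ((k + 1 : ℝ) * π * x) * Real.sin ((k + 1 : ℝ) * π * y) * Real.sin ((m+1:ℝ)*π*y)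
      = (Real.exp (-((k + 1 : ℝ) ^ 2 * π ^ 2 * r)) *
        Real.sin ((k + 1 : ℝ) * π * x) * Real.sin ((k + 1 : ℝ) * π * y)) * Real.sin ((m+1:ℝ)*π*y) from rfl,
      norm_mul]
    have h1 := term_bound (r := r) x k y
    have h2 : ‖Real.sin ((m+1:ℝ)*π*y)‖ ≤ 1 := by
      rw [Real.norm_eq_abs]; exact Real.abs_sin_le_one _
    calc _ ≤ Real.exp (-((k + 1 : ℝ) ^ 2 * π ^ 2 * r)) * 1 :=
          mul_le_mul h1 h2 (norm_nonneg _) (Real.exp_pos _).le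
      _ = _ := mul_one _
  have hlint : ∑' k : ℕ, ∫⁻ y in Set.Ioc (0:ℝ) 1, ‖f k y‖₊ ∂volume ≠ ⊤ := by
    have h1 : ∀ k : ℕ, ∫⁻ y in Set.Ioc (0:ℝ) 1, (‖f k y‖₊ : ENNReal) ∂volume
        ≤ ENNReal.ofReal (Real.exp (-((k + 1 : ℝ) ^ 2 * π ^ 2 * r))) := by
      intro k
      calc ∫⁻ y in Set.Ioc (0:ℝ) 1, (‖f k y‖₊ : ENNReal) ∂volume
          ≤ ∫⁻ _ in Set.Ioc (0:ℝ) 1, ENNReal.ofReal (Real.exp (-((k + 1 : ℝ) ^ 2 * π ^ 2 * r))) ∂volume := by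
            apply lintegral_mono
            intro y
            show (‖f k y‖₊ : ENNReal) ≤ _
            rw [← ENNReal.ofReal_coe_nnreal, coe_nnnorm]
            exact ENNReal.ofReal_le_ofReal (hbound k y)
        _ = ENNReal.ofReal (Real.exp (-((k + 1 : ℝ) ^ 2 * π ^ 2 * r))) := by
            rw [MeasureTheory.setLIntegral_const]
            simp
    apply ne_top_of_le_ne_top _ (ENNReal.tsum_le_tsum h1)
    rw [← ENNReal.ofReal_tsum_of_nonneg (fun k => (Real.exp_pos _).le) (summable_exp_sq hr)]
    exact ENNReal.ofReal_ne_top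
  have hswap : ∫ y in Set.Ioc (0:ℝ) 1, (∑' k, f k y) ∂volume
      = ∑' k, ∫ y in Set.Ioc (0:ℝ) 1, f k y ∂volume :=
    MeasureTheory.integral_tsum hmeas hlint
  calc ∫ y in (0:ℝ)..1, GD r x y * Real.sin ((m+1:ℝ)*π*y)
      = ∫ y in (0:ℝ)..1, 2 * ∑' k, f k y := by
        exact intervalIntegral.integral_congr (fun y _ => hpt y)
    _ = 2 * ∫ y in Set.Ioc (0:ℝ) 1, (∑' k, f k y) ∂volume := by
        rw [intervalIntegral.integral_of_le (by norm_num : (0:ℝ) ≤ 1), MeasureTheory.integral_const_mul]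
    _ = 2 * ∑' k, ∫ y in Set.Ioc (0:ℝ) 1, f k y ∂volume := by rw [hswap]
    _ = 2 * ∑' k : ℕ, Real.exp (-((k + 1 : ℝ) ^ 2 * π ^ 2 * r)) * Real.sin ((k + 1 : ℝ) * π * x)
          * (if k = m then (1:ℝ)/2 else 0) := by
        congr 1
        apply tsum_congr
        intro k
        rw [← intervalIntegral.integral_of_le (by norm_num : (0:ℝ) ≤ 1)]
        rw [hf]
        simp only [mul_assoc]
        rw [intervalIntegral.integral_const_mul, intervalIntegral.integral_const_mul]
        congr 2
        rw [← integral_sin_sin k m]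
        apply intervalIntegral.integral_congr
        intro y _
        ring_nf
    _ = _ := by
        rw [tsum_eq_single m (fun k hk => by simp [hk])]
        simp
        ring

section CS
variable {r x : ℝ} (hr : 0 < r) (N : ℕ)

noncomputable def gg (x : ℝ) (N : ℕ) (y : ℝ) : ℝ :=
  ∑ k ∈ Finset.range N, Real.sin ((k+1:ℝ)*π*x) * Real.sin ((k+1:ℝ)*π*y)

lemma continuous_gg : Continuous (gg x N) := by
  unfold gg; apply continuous_finset_sum; intro k _; continuity

lemma integral_gg_sq :
    ∫ y in (0:ℝ)..1, (gg x N y)^2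
      = (∑ k ∈ Finset.range N, Real.sin ((k+1:ℝ)*π*x)^2) / 2 := by
  have hpt : ∀ y, (gg x N y)^2 = ∑ k ∈ Finset.range N, ∑ j ∈ Finset.range N,
      (Real.sin ((k+1:ℝ)*π*x) * Real.sin ((j+1:ℝ)*π*x)) *
        (Real.sin ((k+1:ℝ)*π*y) * Real.sin ((j+1:ℝ)*π*y)) := by
    intro y
    rw [sq, gg, Finset.sum_mul_sum]
    apply Finset.sum_congr rfl; intro k _
    apply Finset.sum_congr rfl; intro j _
    ring
  rw [intervalIntegral.integral_congr (g := fun y => ∑ k ∈ Finset.range N, ∑ j ∈ Finset.range N,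
      (Real.sin ((k+1:ℝ)*π*x) * Real.sin ((j+1:ℝ)*π*x)) *
        (Real.sin ((k+1:ℝ)*π*y) * Real.sin ((j+1:ℝ)*π*y))) (fun y _ => hpt y)]
  rw [intervalIntegral.integral_finset_sum (fun k _ => by
    apply Continuous.intervalIntegrable; apply continuous_finset_sum; intro j _; continuity)]
  have : ∀ k ∈ Finset.range N, (∫ y in (0:ℝ)..1, ∑ j ∈ Finset.range N,
      (Real.sin ((k+1:ℝ)*π*x) * Real.sin ((j+1:ℝ)*π*x)) *
        (Real.sin ((k+1:ℝ)*π*y) * Real.sin ((j+1:ℝ)*π*y)))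
      = Real.sin ((k+1:ℝ)*π*x)^2 / 2 := by
    intro k hk
    rw [intervalIntegral.integral_finset_sum (fun j _ => by
      apply Continuous.intervalIntegrable; continuity)]
    have h2 : ∀ j ∈ Finset.range N, (∫ y in (0:ℝ)..1,
        (Real.sin ((k+1:ℝ)*π*x) * Real.sin ((j+1:ℝ)*π*x)) *
          (Real.sin ((k+1:ℝ)*π*y) * Real.sin ((j+1:ℝ)*π*y)))
        = (Real.sin ((k+1:ℝ)*π*x) * Real.sin ((j+1:ℝ)*π*x)) * (if k = j then 1/2 else 0) := by
      intro j _
      rw [intervalIntegral.integral_const_mul, integral_sin_sin k j]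
    rw [Finset.sum_congr rfl h2]
    rw [show (∑ j ∈ Finset.range N, Real.sin ((k+1:ℝ)*π*x) * Real.sin ((j+1:ℝ)*π*x)
        * if k = j then (1:ℝ)/2 else 0)
      = ∑ j ∈ Finset.range N, (if k = j then Real.sin ((k+1:ℝ)*π*x) * Real.sin ((j+1:ℝ)*π*x) * (1/2) else 0)
      from Finset.sum_congr rfl (fun j _ => by split <;> simp)]
    rw [Finset.sum_ite_eq (Finset.range N) k
      (fun j => Real.sin ((k+1:ℝ)*π*x) * Real.sin ((j+1:ℝ)*π*x) * (1/2))]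
    simp only [hk, if_pos]
    ring
  rw [Finset.sum_congr rfl this, ← Finset.sum_div]

lemma integral_GD_gg {r : ℝ} (hr : 0 < r) (x : ℝ) (N : ℕ) :
    ∫ y in (0:ℝ)..1, GD r x y * gg x N y
      = ∑ k ∈ Finset.range N, Real.exp (-((k + 1 : ℝ) ^ 2 * π ^ 2 * r)) *
          Real.sin ((k + 1 : ℝ) * π * x)^2 := by
  have hpt : ∀ y, GD r x y * gg x N y = ∑ k ∈ Finset.range N,
      Real.sin ((k+1:ℝ)*π*x) * (GD r x y * Real.sin ((k+1:ℝ)*π*y)) := by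
    intro y
    rw [gg, Finset.mul_sum]
    apply Finset.sum_congr rfl; intro k _; ring
  rw [intervalIntegral.integral_congr (g := fun y => ∑ k ∈ Finset.range N,
      Real.sin ((k+1:ℝ)*π*x) * (GD r x y * Real.sin ((k+1:ℝ)*π*y))) (fun y _ => hpt y)]
  rw [intervalIntegral.integral_finset_sum (fun k _ => by
    apply Continuous.intervalIntegrable
    exact continuous_const.mul ((continuous_GD hr x).mul (by continuity)))]
  apply Finset.sum_congr rfl
  intro k _
  rw [intervalIntegral.integral_const_mul, integral_GD_sin hr x k]
  ring

lemma cauchy_schwarz_GD {r x : ℝ} (hr : 0 < r) (N : ℕ) (lam : ℝ) :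
    2 * lam * (∫ y in (0:ℝ)..1, GD r x y * gg x N y)
      - lam^2 * (∫ y in (0:ℝ)..1, (gg x N y)^2)
      ≤ ∫ y in (0:ℝ)..1, (GD r x y)^2 := by
  have hF := continuous_GD hr x
  have hg := continuous_gg (x := x) (N := N)
  have h0 : (0:ℝ) ≤ ∫ y in (0:ℝ)..1, (GD r x y - lam * gg x N y)^2 :=
    intervalIntegral.integral_nonneg (by norm_num) (fun y _ => sq_nonneg _)
  have hexp : ∀ y : ℝ, (GD r x y - lam * gg x N y)^2
      = (GD r x y)^2 - 2*lam*(GD r x y * gg x N y) + lam^2*(gg x N y)^2 := by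
    intro y; ring
  rw [intervalIntegral.integral_congr (g := fun y =>
      (GD r x y)^2 - 2*lam*(GD r x y * gg x N y) + lam^2*(gg x N y)^2) (fun y _ => hexp y)] at h0
  have i1 : IntervalIntegrable (fun y => (GD r x y)^2) volume 0 1 :=
    (hF.pow 2).intervalIntegrable 0 1
  have i2 : IntervalIntegrable (fun y => 2*lam*(GD r x y * gg x N y)) volume 0 1 :=
    (continuous_const.mul (hF.mul hg)).intervalIntegrable 0 1
  have i3 : IntervalIntegrable (fun y => lam^2*(gg x N y)^2) volume 0 1 :=
    (continuous_const.mul (hg.pow 2)).intervalIntegrable 0 1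
  rw [intervalIntegral.integral_add (i1.sub i2) i3, intervalIntegral.integral_sub i1 i2,
    intervalIntegral.integral_const_mul, intervalIntegral.integral_const_mul] at h0
  linarith
end CS

lemma sum_sin_sq_lower {x : ℝ} (hx0 : 0 < x) (hx : x ≤ 1/2) (N : ℕ) :
    (N:ℝ)/2 - 1/(4*x) ≤ ∑ k ∈ Finset.range N, Real.sin ((k+1:ℝ)*π*x)^2 := by
  have hπx0 : 0 < π * x := by positivity
  have hπx1 : π * x < π := by nlinarith [Real.pi_pos]
  have hsin : 0 < Real.sin (π * x) := Real.sin_pos_of_pos_of_lt_pi hπx0 hπx1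
  have hsin2x : 2 * x ≤ Real.sin (π * x) := by
    have := Real.mul_le_sin (x := π * x) hπx0.le (by nlinarith [Real.pi_pos])
    calc 2 * x = 2 / π * (π * x) := by field_simp
      _ ≤ Real.sin (π * x) := this
  -- telescoping bound on C
  set C : ℝ := ∑ k ∈ Finset.range N, Real.cos (2 * ((k+1:ℝ)*π*x)) with hC
  have htel : 2 * Real.sin (π*x) * C
      = Real.sin ((2*N+1:ℝ)*π*x) - Real.sin ((1:ℝ)*π*x) := by
    have hterm : ∀ k : ℕ, 2 * Real.sin (π*x) * Real.cos (2 * ((k+1:ℝ)*π*x))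
        = Real.sin ((2*(k+1:ℝ)+1)*π*x) - Real.sin ((2*(k:ℝ)+1)*π*x) := by
      intro k
      rw [Real.sin_sub_sin]
      have h1 : ((2*(k+1:ℝ)+1)*π*x - (2*(k:ℝ)+1)*π*x) / 2 = π * x := by ring
      have h2 : ((2*(k+1:ℝ)+1)*π*x + (2*(k:ℝ)+1)*π*x) / 2 = 2 * ((k+1:ℝ)*π*x) := by ring
      rw [h1, h2]
    calc 2 * Real.sin (π*x) * C
        = ∑ k ∈ Finset.range N, (Real.sin ((2*((k:ℝ)+1)+1)*π*x) - Real.sin ((2*(k:ℝ)+1)*π*x)) := by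
          rw [hC, Finset.mul_sum]
          exact Finset.sum_congr rfl (fun k _ => hterm k)
      _ = Real.sin ((2*N+1:ℝ)*π*x) - Real.sin ((1:ℝ)*π*x) := by
          have := Finset.sum_range_sub (fun k : ℕ => Real.sin ((2*(k:ℝ)+1)*π*x)) N
          simp only [Nat.cast_add, Nat.cast_one, Nat.cast_zero] at this
          rw [this]
          norm_num
  have hCle : C ≤ 1/(2 * Real.sin (π*x)) := by
    have h1 : 2 * Real.sin (π*x) * C ≤ 1 := by
      rw [htel]
      have := Real.sin_le_one ((2*N+1:ℝ)*π*x)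
      have h2 : Real.sin ((1:ℝ)*π*x) = Real.sin (π*x) := by norm_num
      linarith
    rw [le_div_iff₀ (by positivity)]
    linarith [mul_comm C (2 * Real.sin (π*x))]
  have hC4x : C ≤ 1/(2*x) := by
    calc C ≤ 1/(2 * Real.sin (π*x)) := hCle
      _ ≤ 1/(2*(2*x)) := by
        apply one_div_le_one_div_of_le (by positivity)
        linarith
      _ ≤ 1/(2*x) := by
        apply one_div_le_one_div_of_le (by positivity)
        nlinarith
  have hS : ∑ k ∈ Finset.range N, Real.sin ((k+1:ℝ)*π*x)^2 = (N:ℝ)/2 - C/2 := by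
    have : ∀ k ∈ Finset.range N, Real.sin ((k+1:ℝ)*π*x)^2
        = 1/2 - Real.cos (2 * ((k+1:ℝ)*π*x))/2 := fun k _ => Real.sin_sq_eq_half_sub _
    rw [Finset.sum_congr rfl this, Finset.sum_sub_distrib, Finset.sum_const, Finset.card_range,
      hC, ← Finset.sum_div]
    simp
    ring
  rw [hS]
  have : C/2 ≤ 1/(4*x) := by
    calc C/2 ≤ (1/(2*x))/2 := by linarith
      _ = 1/(4*x) := by ring
  linarith

set_option maxHeartbeats 1000000 in
theorem dirichlet_kernel_L2_lower_bound (θ : ℝ) (hθ0 : 0 < θ) (hθ : θ < 1 / 2) :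
    ∃ c t₀ : ℝ, 0 < c ∧ 0 < t₀ ∧ t₀ < 1 / 4 ∧
      ∀ t : ℝ, 0 < t → t ≤ t₀ → ∀ r : ℝ, 0 < r → r ≤ t →
        c * r ^ (-(1/2) : ℝ) ≤ ∫ y in (0 : ℝ)..1, (GD r (t ^ θ) y) ^ 2 := by
  set ε : ℝ := 1/2 - θ with hε
  have hε0 : 0 < ε := by simp [hε]; linarith
  set E : ℝ := Real.exp (-(π^2)) with hE
  have hE0 : 0 < E := Real.exp_pos _
  refine ⟨E^2/4, min (min ((1/2:ℝ)^((1:ℝ)/ε)) ((1/2:ℝ)^((1:ℝ)/θ))) (1/5), by positivity, ?_, ?_, ?_⟩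
  · positivity
  · calc min (min ((1/2:ℝ)^((1:ℝ)/ε)) ((1/2:ℝ)^((1:ℝ)/θ))) (1/5) ≤ 1/5 := min_le_right _ _
      _ < 1/4 := by norm_num
  intro t ht htt₀ r hr hrt
  set x : ℝ := t ^ θ with hx
  have hx0 : 0 < x := Real.rpow_pos_of_pos ht θ
  have ht5 : t ≤ 1/5 := le_trans htt₀ (min_le_right _ _)
  have htε : t ^ ε ≤ 1/2 := by
    calc t ^ ε ≤ ((1/2:ℝ)^((1:ℝ)/ε)) ^ ε := by
          apply Real.rpow_le_rpow ht.le _ hε0.le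
          exact le_trans htt₀ (le_trans (min_le_left _ _) (min_le_left _ _))
      _ = 1/2 := by
          rw [← Real.rpow_mul (by norm_num)]
          rw [show (1:ℝ)/ε * ε = 1 by field_simp]
          exact Real.rpow_one _
  have hxhalf : x ≤ 1/2 := by
    calc x ≤ ((1/2:ℝ)^((1:ℝ)/θ)) ^ θ := by
          apply Real.rpow_le_rpow ht.le _ hθ0.le
          exact le_trans htt₀ (le_trans (min_le_left _ _) (min_le_right _ _))
      _ = 1/2 := by
          rw [← Real.rpow_mul (by norm_num)]
          rw [show (1:ℝ)/θ * θ = 1 by field_simp]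
          exact Real.rpow_one _
  -- basic sqrt facts
  set Q : ℝ := r ^ (-(1/2) : ℝ) with hQ
  have hQeq : Q = (Real.sqrt r)⁻¹ := by
    rw [hQ, Real.rpow_neg hr.le, Real.sqrt_eq_rpow]
  have hsr : 0 < Real.sqrt r := Real.sqrt_pos.mpr hr
  have hst : 0 < Real.sqrt t := Real.sqrt_pos.mpr ht
  have hQ0 : 0 < Q := by rw [hQeq]; positivity
  have hQ2 : 2 ≤ Q := by
    have hsr2 : Real.sqrt r ≤ 1/2 := by
      calc Real.sqrt r ≤ Real.sqrt (1/4) := Real.sqrt_le_sqrt (by linarith)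
        _ = 1/2 := by rw [show (1/4:ℝ) = (1/2)^2 by norm_num, Real.sqrt_sq (by norm_num)]
    rw [hQeq]
    calc (2:ℝ) = (1/2:ℝ)⁻¹ := by norm_num
      _ ≤ (Real.sqrt r)⁻¹ := inv_anti₀ hsr hsr2
  have hQt : (Real.sqrt t)⁻¹ ≤ Q := by
    rw [hQeq]
    exact inv_anti₀ hsr (Real.sqrt_le_sqrt hrt)
  set N : ℕ := ⌊Q⌋₊ with hN
  have hNQ : (N:ℝ) ≤ Q := Nat.floor_le hQ0.le
  have hQN : Q - 1 ≤ (N:ℝ) := by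
    have := Nat.lt_floor_add_one Q
    linarith
  -- exponential lower bound on modes
  have hmode : ∀ k ∈ Finset.range N, E ≤ Real.exp (-((k + 1 : ℝ) ^ 2 * π ^ 2 * r)) := by
    intro k hk
    rw [hE]
    apply Real.exp_le_exp.mpr
    have hk1 : (k:ℝ) + 1 ≤ N := by
      have := Finset.mem_range.mp hk
      exact_mod_cast Nat.succ_le_of_lt this
    have hkQ : (k:ℝ) + 1 ≤ (Real.sqrt r)⁻¹ := by rw [← hQeq]; linarith
    have h1 : ((k:ℝ)+1) * Real.sqrt r ≤ 1 := by
      rw [← le_div_iff₀ hsr, one_div]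
      exact hkQ
    have h2 : ((k:ℝ)+1)^2 * r ≤ 1 := by
      have hkr0 : 0 ≤ ((k:ℝ)+1) * Real.sqrt r := by positivity
      have h1sq : (((k:ℝ)+1) * Real.sqrt r) * (((k:ℝ)+1) * Real.sqrt r) ≤ 1 :=
        mul_le_one₀ h1 hkr0 h1
      have hrr := Real.sq_sqrt hr.le
      nlinarith [h1sq, hrr]
    have hπ2 : (0:ℝ) < π^2 := by positivity
    nlinarith
  -- x⁻¹ bound
  have hinvx : x⁻¹ ≤ Q/2 := by
    have h1 : x⁻¹ = t ^ (-θ) := by rw [hx, ← Real.rpow_neg ht.le]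
    have h2 : t ^ (-θ) = t ^ (-(1/2):ℝ) * t ^ ε := by
      rw [← Real.rpow_add ht]
      congr 1
      rw [hε]; ring
    have h3 : t ^ (-(1/2):ℝ) = (Real.sqrt t)⁻¹ := by
      rw [Real.rpow_neg ht.le, Real.sqrt_eq_rpow]
    have h4 : (0:ℝ) < t ^ (-(1/2):ℝ) := Real.rpow_pos_of_pos ht _
    calc x⁻¹ = t ^ (-(1/2):ℝ) * t ^ ε := by rw [h1, h2]
      _ ≤ t ^ (-(1/2):ℝ) * (1/2) := by
          apply mul_le_mul_of_nonneg_left htε h4.le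
      _ ≤ Q * (1/2) := by
          apply mul_le_mul_of_nonneg_right _ (by norm_num)
          rw [h3]; exact hQt
      _ = Q/2 := by ring
  -- the sum S
  set S : ℝ := ∑ k ∈ Finset.range N, Real.sin ((k+1:ℝ)*π*x)^2 with hS
  have hS0 : 0 ≤ S := Finset.sum_nonneg (fun k _ => sq_nonneg _)
  have hSlow : Q/8 ≤ S := by
    have h1 := sum_sin_sq_lower hx0 hxhalf N
    have h2 : 1/(4*x) ≤ Q/8 := by
      calc 1/(4*x) = x⁻¹/4 := by rw [inv_eq_one_div]; ring
        _ ≤ (Q/2)/4 := by linarith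
        _ = Q/8 := by ring
    -- S ≥ N/2 - 1/(4x) ≥ (Q-1)/2 - Q/8 = 3Q/8 - 1/2 ≥ Q/4 - 1/2
    have h3 : (N:ℝ)/2 ≥ (Q-1)/2 := by linarith
    rw [← hS] at h1
    linarith
  -- Cauchy-Schwarz
  have hI1 : E * S ≤ ∫ y in (0:ℝ)..1, GD r x y * gg x N y := by
    rw [integral_GD_gg hr x N, hS, Finset.mul_sum]
    apply Finset.sum_le_sum
    intro k hk
    exact mul_le_mul_of_nonneg_right (hmode k hk) (sq_nonneg _)
  have hCS := cauchy_schwarz_GD (x := x) hr N (2*E)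
  rw [integral_gg_sq N] at hCS
  rw [← hS] at hCS
  have hI1' : 2*(2*E) * (E*S) ≤ 2*(2*E) * (∫ y in (0:ℝ)..1, GD r x y * gg x N y) := by
    apply mul_le_mul_of_nonneg_left hI1 (by positivity)
  have hfin : 2 * E^2 * S ≤ ∫ y in (0:ℝ)..1, (GD r x y)^2 := by
    have hA : (2*E)^2*(S/2) = 2*(E^2*S) := by ring
    have hB : 2*(2*E)*(E*S) = 4*(E^2*S) := by ring
    linarith [hCS, hI1']
  calc E^2/4 * Q = 2 * E^2 * (Q/8) := by ring
    _ ≤ 2 * E^2 * S := by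
        apply mul_le_mul_of_nonneg_left hSlow (by positivity)
    _ ≤ _ := hfin
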